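/- arXiv:2205.14350 — 2 statements merged into one kernel-verified Lean document; each statement's English description precedes it below -/
import Mathlib

section
/- Let d ≥ 1 be an integer. There exists a constant C > 0, depending only on d, such that for every t ∈ (0,1) and every integer N ≥ 1, ∑_{n ∈ ℤ^d, 1 ≤ |n| ≤ N} e^{−|n|² t} |n|^{2−d} ≤ C · min(1/t, N²). -/
open scoped BigOperators

noncomputable def znorm {d : ℕ} (n : Fin d → ℤ) : ℝ :=
  Real.sqrt (∑ i, ((n i : ℝ)) ^ 2)

lemma znorm_nonneg' {d : ℕ} (n : Fin d → ℤ) : 0 ≤ znorm n := Real.sqrt_nonneg _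

lemma abs_le_znorm {d : ℕ} (n : Fin d → ℤ) (i : Fin d) : |(n i : ℝ)| ≤ znorm n := by
  rw [← Real.sqrt_sq_eq_abs]
  exact Real.sqrt_le_sqrt
    (Finset.single_le_sum (fun j _ => sq_nonneg ((n j : ℝ))) (Finset.mem_univ i))

lemma aux_exp_ineq (y : ℝ) (hy : 0 ≤ y) :
    y * Real.exp (-y) ≤ (4/3) * (Real.exp (-(y/4)) - Real.exp (-y)) := by
  have hadd := Real.add_one_le_exp (y/4)
  set u := Real.exp (-(y/4)) with hu'
  have hupos : 0 < u := Real.exp_pos _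
  have hinv : Real.exp (y/4) * u = 1 := by
    rw [hu', ← Real.exp_add]; norm_num
  have hkey : u * (1 + y/4) ≤ 1 := by nlinarith [hupos]
  have hule : u ≤ 1 := by nlinarith [hupos]
  have h4 : Real.exp (-y) = u^4 := by
    rw [hu', ← Real.exp_nat_mul]; norm_num; ring_nf
  rw [h4]
  have hyu : y * u ≤ 4 * (1 - u) := by nlinarith
  nlinarith [pow_nonneg hupos.le 3, mul_nonneg (mul_nonneg hupos.le (sq_nonneg (1-u)))
    (by linarith : (0:ℝ) ≤ 2*u+1), sq_nonneg u]

theorem stmt2 (d : ℕ) (hd : 0 < d) :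
    ∃ C : ℝ, 0 < C ∧
      ∀ t : ℝ, 0 < t → t < 1 → ∀ N : ℕ, 1 ≤ N →
        ∑' n : {n : Fin d → ℤ // 1 ≤ znorm n ∧ znorm n ≤ (N : ℝ)},
            Real.exp (-(znorm n.1 ^ 2) * t) * znorm n.1 ^ ((2 : ℝ) - d)
          ≤ C * min (1 / t) ((N : ℝ) ^ 2) := by
  classical
  refine ⟨16 * 8 ^ d, by positivity, ?_⟩
  intro t ht ht1 N hN
  set f : (Fin d → ℤ) → ℝ :=
    fun n => Real.exp (-(znorm n ^ 2) * t) * znorm n ^ ((2 : ℝ) - d) with hf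
  have hf0 : ∀ n, 0 ≤ f n := by
    intro n
    exact mul_nonneg (Real.exp_nonneg _) (Real.rpow_nonneg (znorm_nonneg' n) _)
  set P : Set (Fin d → ℤ) := {n | 1 ≤ znorm n ∧ znorm n ≤ (N : ℝ)} with hP
  set A : Finset (Fin d → ℤ) :=
    Fintype.piFinset fun _ : Fin d => Finset.Icc (-(N : ℤ)) (N : ℤ) with hA
  set J : ℕ := Nat.log 2 N with hJ
  set jf : (Fin d → ℤ) → ℕ := fun n => Nat.log 2 (⌊znorm n⌋).toNat with hjf
  set s₀ : Finset (Fin d → ℤ) := A.filter (fun n => n ∈ P) with hs₀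
  -- Step 1 : tsum = finite sum over s₀
  have step1 : ∑' n : {n : Fin d → ℤ // 1 ≤ znorm n ∧ znorm n ≤ (N : ℝ)}, f n.1
      = ∑ n ∈ s₀, f n := by
    have h1 : ∑' n : {n : Fin d → ℤ // 1 ≤ znorm n ∧ znorm n ≤ (N : ℝ)}, f n.1
        = ∑' n : (Fin d → ℤ), P.indicator f n := tsum_subtype P f
    have h2 : ∑' n : (Fin d → ℤ), P.indicator f n = ∑ n ∈ A, P.indicator f n := by
      refine tsum_eq_sum ?_
      intro n hn
      have : n ∉ P := by
        intro hnP
        apply hn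
        rw [hA, Fintype.mem_piFinset]
        intro i
        rw [Finset.mem_Icc, ← abs_le]
        have h3 : ((|n i| : ℤ) : ℝ) ≤ ((N : ℤ) : ℝ) := by
          push_cast
          exact (abs_le_znorm n i).trans hnP.2
        exact_mod_cast h3
      exact Set.indicator_of_notMem this f
    rw [h1, h2, hs₀, Finset.sum_filter]
    exact Finset.sum_congr rfl fun n _ => by
      rw [Set.indicator_apply]
  -- Step 2 : fiberwise decomposition
  have hmaps : ∀ n ∈ s₀, jf n ∈ Finset.range (J + 1) := by
    intro n hn
    rw [hs₀, Finset.mem_filter] at hn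
    have hle : znorm n ≤ (N : ℝ) := hn.2.2
    have hfloor : (⌊znorm n⌋).toNat ≤ N := by
      rw [Int.toNat_le]
      exact (Int.floor_le_floor hle).trans (le_of_eq (Int.floor_natCast N))
    exact Finset.mem_range.mpr (Nat.lt_succ_of_le (Nat.log_mono_right hfloor))
  have step2 : ∑ n ∈ s₀, f n
      = ∑ j ∈ Finset.range (J + 1), ∑ n ∈ s₀.filter (fun n => jf n = j), f n :=
    (Finset.sum_fiberwise_of_maps_to hmaps f).symm
  -- shell estimates
  have hshell : ∀ j : ℕ, ∀ n ∈ s₀.filter (fun n => jf n = j),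
      (2:ℝ)^j ≤ znorm n ∧ znorm n < (2:ℝ)^(j+1) := by
    intro j n hn
    rw [Finset.mem_filter] at hn
    obtain ⟨hn0, hjn⟩ := hn
    rw [hs₀, Finset.mem_filter] at hn0
    have h1 : 1 ≤ znorm n := hn0.2.1
    set m : ℕ := (⌊znorm n⌋).toNat with hm
    have hfl1 : (1:ℤ) ≤ ⌊znorm n⌋ := Int.le_floor.mpr (by exact_mod_cast h1)
    have hmz : ((m:ℕ):ℤ) = ⌊znorm n⌋ := Int.toNat_of_nonneg (by linarith)
    have hm0 : m ≠ 0 := by omega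
    have hjm : j = Nat.log 2 m := by rw [← hjn, hjf]
    have hmle : (m : ℝ) ≤ znorm n := by
      have h2 : ((⌊znorm n⌋ : ℤ) : ℝ) ≤ znorm n := Int.floor_le _
      rw [← hmz] at h2; exact_mod_cast h2
    have hlt : znorm n < (m : ℝ) + 1 := by
      have h2 : znorm n < ((⌊znorm n⌋ : ℤ) : ℝ) + 1 := Int.lt_floor_add_one _
      rw [← hmz] at h2; exact_mod_cast h2
    constructor
    · have hp : 2 ^ (Nat.log 2 m) ≤ m := Nat.pow_log_le_self 2 hm0
      rw [hjm]
      calc (2:ℝ) ^ (Nat.log 2 m) = ((2 ^ (Nat.log 2 m) : ℕ) : ℝ) := by push_cast; ring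
        _ ≤ (m : ℝ) := by exact_mod_cast hp
        _ ≤ znorm n := hmle
    · have hp : m < 2 ^ (Nat.log 2 m + 1) := Nat.lt_pow_succ_log_self (by norm_num) m
      have hp2 : m + 1 ≤ 2 ^ (Nat.log 2 m + 1) := hp
      rw [hjm]
      calc znorm n < (m:ℝ) + 1 := hlt
        _ ≤ ((2 ^ (Nat.log 2 m + 1) : ℕ) : ℝ) := by exact_mod_cast hp2
        _ = (2:ℝ) ^ (Nat.log 2 m + 1) := by push_cast; ring
  -- pointwise bound on each fiber
  set G : ℕ → ℝ := fun j => (4:ℝ)^j * Real.exp (-((4:ℝ)^j * t)) with hG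
  have hfiber : ∀ j ∈ Finset.range (J+1),
      ∑ n ∈ s₀.filter (fun n => jf n = j), f n ≤ 4 * 8^d * G j := by
    intro j _
    set Bj : ℝ := Real.exp (-((4:ℝ)^j * t)) * (4 * ((2:ℝ)^j) ^ ((2:ℝ) - (d:ℝ))) with hBj
    have hBj0 : 0 ≤ Bj := by
      rw [hBj]; positivity
    have hpt : ∀ n ∈ s₀.filter (fun n => jf n = j), f n ≤ Bj := by
      intro n hn
      obtain ⟨hlow, hhigh⟩ := hshell j n hn
      have hzpos : (0:ℝ) < znorm n := lt_of_lt_of_le (by positivity) hlow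
      have hexp : Real.exp (-(znorm n ^ 2) * t) ≤ Real.exp (-((4:ℝ)^j * t)) := by
        apply Real.exp_le_exp.mpr
        have hsq : ((2:ℝ)^j)^2 ≤ znorm n ^ 2 := by
          nlinarith [hlow, hzpos, pow_pos (show (0:ℝ) < 2 by norm_num) j]
        have h4 : ((2:ℝ)^j)^2 = (4:ℝ)^j := by
          rw [← pow_mul, mul_comm j 2, pow_mul]; norm_num
        nlinarith [ht, hsq, h4]
      have hrpow : znorm n ^ ((2:ℝ) - (d:ℝ)) ≤ 4 * ((2:ℝ)^j) ^ ((2:ℝ) - (d:ℝ)) := by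
        rcases le_total ((2:ℝ) - (d:ℝ)) 0 with he | he
        · have h5 : znorm n ^ ((2:ℝ) - (d:ℝ)) ≤ ((2:ℝ)^j) ^ ((2:ℝ) - (d:ℝ)) :=
            Real.rpow_le_rpow_of_nonpos (by positivity) hlow he
          nlinarith [Real.rpow_pos_of_pos (show (0:ℝ) < (2:ℝ)^j by positivity) ((2:ℝ) - (d:ℝ))]
        · have h5 : znorm n ^ ((2:ℝ) - (d:ℝ)) ≤ ((2:ℝ)^(j+1)) ^ ((2:ℝ) - (d:ℝ)) :=
            Real.rpow_le_rpow (znorm_nonneg' n) hhigh.le he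
          have h6 : ((2:ℝ)^(j+1)) ^ ((2:ℝ) - (d:ℝ))
              = (2:ℝ) ^ ((2:ℝ) - (d:ℝ)) * ((2:ℝ)^j) ^ ((2:ℝ) - (d:ℝ)) := by
            rw [pow_succ, mul_comm ((2:ℝ)^j) 2,
              Real.mul_rpow (by norm_num) (by positivity)]
          have h7 : (2:ℝ) ^ ((2:ℝ) - (d:ℝ)) ≤ 4 := by
            have h8 : (2:ℝ) ^ ((2:ℝ) - (d:ℝ)) ≤ (2:ℝ) ^ (((2:ℕ)):ℝ) :=
              Real.rpow_le_rpow_of_exponent_le one_le_two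
                (by push_cast
                    have hd0 : (0:ℝ) ≤ (d:ℝ) := by positivity
                    linarith)
            rw [Real.rpow_natCast] at h8
            norm_num at h8
            linarith
          nlinarith [h5, h6, h7,
            Real.rpow_pos_of_pos (show (0:ℝ) < (2:ℝ)^j by positivity) ((2:ℝ) - (d:ℝ))]
      rw [hBj]
      exact mul_le_mul hexp hrpow (Real.rpow_nonneg (znorm_nonneg' n) _) (Real.exp_nonneg _)
    have hsub : s₀.filter (fun n => jf n = j) ⊆
        Fintype.piFinset (fun _ : Fin d => Finset.Icc (-(2^(j+1):ℤ)) (2^(j+1))) := by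
      intro n hn
      obtain ⟨hlow, hhigh⟩ := hshell j n hn
      rw [Fintype.mem_piFinset]
      intro i
      rw [Finset.mem_Icc, ← abs_le]
      have h3 : ((|n i| : ℤ) : ℝ) < (((2:ℤ)^(j+1) : ℤ) : ℝ) := by
        push_cast
        exact lt_of_le_of_lt (abs_le_znorm n i) hhigh
      exact le_of_lt (by exact_mod_cast h3)
    have hcardbox : (Fintype.piFinset
          (fun _ : Fin d => Finset.Icc (-(2^(j+1):ℤ)) (2^(j+1)))).card
        = (2^(j+2) + 1)^d := by
      rw [Fintype.card_piFinset]
      have h9 : (Finset.Icc (-(2^(j+1):ℤ)) (2^(j+1))).card = 2^(j+2) + 1 := by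
        rw [Int.card_Icc]
        have h10 : ((2:ℤ)^(j+1) + 1 - -(2^(j+1))) = ((2^(j+2) + 1 : ℕ) : ℤ) := by
          push_cast; ring
        rw [h10, Int.toNat_natCast]
      simp [h9]
    have hcard : ((s₀.filter (fun n => jf n = j)).card : ℝ) ≤ ((2:ℝ)^(j+3))^d := by
      have h10 : (s₀.filter (fun n => jf n = j)).card ≤ (2^(j+2)+1)^d := by
        rw [← hcardbox]; exact Finset.card_le_card hsub
      have h11 : (2^(j+2)+1 : ℕ) ≤ 2^(j+3) := by
        have h12 : (2:ℕ)^(j+3) = 2^(j+2) * 2 := by rw [pow_succ]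
        have h13 : 1 ≤ (2:ℕ)^(j+2) := Nat.one_le_two_pow
        omega
      calc ((s₀.filter (fun n => jf n = j)).card : ℝ)
          ≤ (((2^(j+2)+1 : ℕ))^d : ℕ) := by exact_mod_cast h10
        _ ≤ (((2^(j+3) : ℕ))^d : ℕ) := by exact_mod_cast Nat.pow_le_pow_left h11 d
        _ = ((2:ℝ)^(j+3))^d := by push_cast; ring
    have hsum : ∑ n ∈ s₀.filter (fun n => jf n = j), f n ≤ ((2:ℝ)^(j+3))^d * Bj := by
      calc ∑ n ∈ s₀.filter (fun n => jf n = j), f n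
          ≤ (s₀.filter (fun n => jf n = j)).card • Bj :=
            Finset.sum_le_card_nsmul _ _ _ hpt
        _ = ((s₀.filter (fun n => jf n = j)).card : ℝ) * Bj := nsmul_eq_mul _ _
        _ ≤ ((2:ℝ)^(j+3))^d * Bj := mul_le_mul_of_nonneg_right hcard hBj0
    refine hsum.trans (le_of_eq ?_)
    rw [hBj]
    simp only [hG]
    have e1 : ((2:ℝ)^(j+3))^d = 8^d * ((2:ℝ)^j)^(d:ℕ) := by
      rw [pow_add, mul_pow]
      norm_num
      ring
    have e2 : ((2:ℝ)^j)^(d:ℕ) * ((2:ℝ)^j) ^ ((2:ℝ) - (d:ℝ)) = (4:ℝ)^j := by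
      rw [← Real.rpow_natCast ((2:ℝ)^j) d, ← Real.rpow_add (by positivity)]
      have e3 : ((d:ℝ) + ((2:ℝ) - (d:ℝ))) = (((2:ℕ)):ℝ) := by push_cast; ring
      rw [e3, Real.rpow_natCast, ← pow_mul, mul_comm j 2, pow_mul]
      norm_num
    calc ((2:ℝ)^(j+3))^d * (Real.exp (-((4:ℝ)^j * t)) * (4 * ((2:ℝ)^j) ^ ((2:ℝ) - (d:ℝ))))
        = 4 * 8^d * ((((2:ℝ)^j)^(d:ℕ) * ((2:ℝ)^j) ^ ((2:ℝ) - (d:ℝ)))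
            * Real.exp (-((4:ℝ)^j * t))) := by rw [e1]; ring
      _ = 4 * 8^d * ((4:ℝ)^j * Real.exp (-((4:ℝ)^j * t))) := by rw [e2]
  have hS : ∑ n ∈ s₀, f n ≤ 4 * 8^d * ∑ j ∈ Finset.range (J+1), G j := by
    rw [step2, Finset.mul_sum]
    exact Finset.sum_le_sum hfiber
  set SS : ℝ := ∑ j ∈ Finset.range (J+1), G j with hSS
  have hb1 : SS ≤ (4/3) * (N:ℝ)^2 := by
    have h1 : SS ≤ ∑ j ∈ Finset.range (J+1), (4:ℝ)^j := by
      apply Finset.sum_le_sum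
      intro j _
      simp only [hG]
      have hE : Real.exp (-((4:ℝ)^j * t)) ≤ 1 := by
        rw [← Real.exp_zero]
        apply Real.exp_le_exp.mpr
        have : (0:ℝ) ≤ (4:ℝ)^j * t := by positivity
        linarith
      nlinarith [pow_pos (show (0:ℝ) < 4 by norm_num) j]
    have h2 : ∑ j ∈ Finset.range (J+1), (4:ℝ)^j = ((4:ℝ)^(J+1) - 1)/(4-1) :=
      geom_sum_eq (by norm_num) (J+1)
    have h3 : (4:ℝ)^J ≤ (N:ℝ)^2 := by
      have h4 : (2:ℕ)^J ≤ N := Nat.pow_log_le_self 2 (by omega)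
      have h5 : ((2:ℝ)^J) ≤ (N:ℝ) := by exact_mod_cast h4
      have h6 : ((2:ℝ)^J)^2 = (4:ℝ)^J := by
        rw [← pow_mul, mul_comm J 2, pow_mul]; norm_num
      nlinarith [pow_pos (show (0:ℝ) < 2 by norm_num) J]
    have h7 : (4:ℝ)^(J+1) = 4 * 4^J := by rw [pow_succ]; ring
    rw [h2] at h1
    linarith
  have hb2 : SS ≤ (4/3) * (1/t) := by
    set a : ℕ → ℝ := fun j => Real.exp (-((4:ℝ)^j * t)/4) with ha
    have hterm : ∀ j ∈ Finset.range (J+1), G j ≤ (4/(3*t)) * (a j - a (j+1)) := by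
      intro j _
      have hy : 0 ≤ (4:ℝ)^j * t := by positivity
      have hkey := aux_exp_ineq ((4:ℝ)^j * t) hy
      have ha1 : a (j+1) = Real.exp (-((4:ℝ)^j * t)) := by
        simp only [ha]
        congr 1
        rw [pow_succ]
        ring
      have ha0 : a j = Real.exp (-(((4:ℝ)^j * t)/4)) := by
        simp only [ha]; congr 1; ring
      simp only [hG]
      rw [ha1, ha0]
      rw [div_mul_eq_mul_div, le_div_iff₀ (by positivity : (0:ℝ) < 3*t)]
      nlinarith [hkey]
    have h8 : SS ≤ ∑ j ∈ Finset.range (J+1), (4/(3*t)) * (a j - a (j+1)) :=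
      Finset.sum_le_sum hterm
    rw [← Finset.mul_sum, Finset.sum_range_sub' a (J+1)] at h8
    have h9 : a 0 - a (J+1) ≤ 1 := by
      have h10 : a 0 ≤ 1 := by
        simp only [ha]
        rw [← Real.exp_zero]
        apply Real.exp_le_exp.mpr
        have : (0:ℝ) ≤ ((4:ℝ)^0 * t) := by positivity
        norm_num
        linarith
      have h11 : 0 < a (J+1) := Real.exp_pos _
      linarith
    calc SS ≤ (4/(3*t)) * (a 0 - a (J+1)) := h8
      _ ≤ (4/(3*t)) * 1 := mul_le_mul_of_nonneg_left h9 (by positivity)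
      _ = (4/3) * (1/t) := by ring
  have hmin : SS ≤ (4/3) * min (1/t) ((N:ℝ)^2) := by
    rcases le_total (1/t) ((N:ℝ)^2) with h | h
    · rw [min_eq_left h]; exact hb2
    · rw [min_eq_right h]; exact hb1
  have hmin0 : 0 ≤ min (1/t) ((N:ℝ)^2) := le_min (by positivity) (by positivity)
  have h8d : (0:ℝ) < 8^d := by positivity
  have final : ∑ n ∈ s₀, f n ≤ 16 * 8^d * min (1/t) ((N:ℝ)^2) := by
    have h12 : 4 * 8^d * SS ≤ 4 * 8^d * ((4/3) * min (1/t) ((N:ℝ)^2)) :=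
      mul_le_mul_of_nonneg_left hmin (by positivity)
    nlinarith [hS, h12, hmin0, h8d]
  exact le_trans (le_of_eq step1) final
end

section
/- Let d ≥ 1 be an integer. There exist c > 0 and t₀ ∈ (0,1), depending only on d, such that for every t ∈ (0,t₀) and every real N ≥ t^{−1/2}, ∑_{n ∈ ℤ^d, 3 ≤ |n| ≤ N} e^{−|n|² t} |n|^{2−d} (log|n|)^{−1} (log log|n|)^{−1} ≥ c · t^{−1} (log(1/t))^{−1} (log log(1/t))^{−1}. -/
/-!
Put `R = t^(-1/2)` and pick an integer `m ≥ 3` with `2√d·m ≤ R ≤ 4√d·m`. The box `[m, 2m)^d`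
contains `m^d` lattice points, all of norm `z ∈ [m, 2√d·m] ⊆ [3, R]`. For each of them
`z²t ≤ 1`, so the heat factor is at least `e⁻¹`; `z^(2-d) = z²/z^d ≥ m²/(2√d·m)^d`; and `z ≤ 1/t`,
so the logarithmic factors are at least their values at `1/t`. Summing over the box gives
`≳ m² (log(1/t) · log log(1/t))⁻¹`, and `m² ≳ R²/d = 1/(d t)`.
-/

open scoped BigOperators

open Real

lemma sum_le_tsum_subtype {α : Type*} {p : α → Prop} [Finite {a // p a}] (s : Finset α)
    (hs : ∀ a ∈ s, p a) {f : α → ℝ} (hf : ∀ a, p a → 0 ≤ f a) :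
    ∑ a ∈ s, f a ≤ ∑' a : {a // p a}, f a := by
  classical
  rw [← Finset.sum_subtype_of_mem f hs]
  exact Summable.sum_le_tsum _ (fun a _ => hf a a.2) .of_finite

lemma rpow_neg_one_div_two_sq {t : ℝ} (ht : 0 < t) : (t ^ (-(1 : ℝ) / 2)) ^ 2 = t⁻¹ := by
  rw [← rpow_natCast, ← rpow_mul ht.le]
  norm_num [rpow_neg_one]

lemma exists_nat_scale {s R : ℝ} (hs : 0 < s) (hR : 6 * s ≤ R) :
    ∃ m : ℕ, 3 ≤ m ∧ 2 * s * m ≤ R ∧ R ^ 2 ≤ 16 * s ^ 2 * m ^ 2 := by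
  set x := R / (2 * s)
  have hRx : R = 2 * s * x := (mul_div_cancel₀ R (by positivity)).symm
  have hx : 3 ≤ x := by rw [le_div_iff₀ (by positivity)]; linarith
  have hm3 : 3 ≤ ⌊x⌋₊ := Nat.le_floor (by exact_mod_cast hx)
  refine ⟨⌊x⌋₊, hm3, by rw [hRx]; gcongr; exact Nat.floor_le (by linarith), ?_⟩
  have hx2 : x ≤ 2 * ⌊x⌋₊ := by
    have : (3 : ℝ) ≤ ⌊x⌋₊ := by exact_mod_cast hm3
    linarith [Nat.lt_floor_add_one x]
  calc R ^ 2 = 4 * s ^ 2 * x ^ 2 := by rw [hRx]; ring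
    _ ≤ 4 * s ^ 2 * (2 * ⌊x⌋₊) ^ 2 := by gcongr
    _ = 16 * s ^ 2 * ⌊x⌋₊ ^ 2 := by ring

lemma log_log_pos_of_three_le {z : ℝ} (hz : 3 ≤ z) : 0 < log (log z) := by
  refine log_pos ?_
  rw [lt_log_iff_exp_lt (by linarith)]
  linarith [exp_one_lt_d9]

lemma inv_log_mul_inv_log_log_le {z w : ℝ} (hz : 3 ≤ z) (hzw : z ≤ w) :
    (log w)⁻¹ * (log (log w))⁻¹ ≤ (log z)⁻¹ * (log (log z))⁻¹ := by
  have hlog_z : 0 < log z := log_pos (by linarith)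
  have hlog_le : log z ≤ log w := log_le_log (by linarith) hzw
  have hloglog_z := log_log_pos_of_three_le hz
  have hloglog_w := log_log_pos_of_three_le (hz.trans hzw)
  gcongr

lemma sq_div_pow_le_rpow_two_sub (d : ℕ) {a b z : ℝ} (ha : 0 < a) (haz : a ≤ z) (hzb : z ≤ b) :
    a ^ 2 / b ^ d ≤ z ^ ((2 : ℝ) - d) := by
  have hz : 0 < z := ha.trans_le haz
  rw [rpow_sub hz, rpow_two, rpow_natCast]
  gcongr

section LatticeNorm

variable {d : ℕ}

lemma abs_coord_le_znorm (n : Fin d → ℤ) (i : Fin d) : |(n i : ℝ)| ≤ znorm n := by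
  rw [← sqrt_sq_eq_abs]
  exact sqrt_le_sqrt (Finset.single_le_sum (f := fun j => (n j : ℝ) ^ 2)
    (fun j _ => sq_nonneg _) (Finset.mem_univ i))

lemma znorm_le_sqrt_mul {n : Fin d → ℤ} {M : ℝ} (hM : 0 ≤ M) (h : ∀ i, |(n i : ℝ)| ≤ M) :
    znorm n ≤ √d * M := by
  calc znorm n ≤ √(∑ _i : Fin d, M ^ 2) :=
        sqrt_le_sqrt (Finset.sum_le_sum fun i _ => sq_le_sq' (abs_le.1 (h i)).1 (abs_le.1 (h i)).2)
    _ = √d * M := by simp [sqrt_mul (Nat.cast_nonneg d), sqrt_sq hM]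

lemma finite_setOf_znorm_le (N : ℝ) : {n : Fin d → ℤ | znorm n ≤ N}.Finite := by
  refine (Set.finite_Icc (fun _ => -⌈N⌉) fun _ => ⌈N⌉).subset fun n hn => ?_
  have hcoord i : |(n i : ℝ)| ≤ ⌈N⌉ := ((abs_coord_le_znorm n i).trans hn).trans (Int.le_ceil N)
  exact ⟨fun i => by exact_mod_cast (abs_le.1 (hcoord i)).1,
    fun i => by exact_mod_cast (abs_le.1 (hcoord i)).2⟩

end LatticeNorm

noncomputable def dyadicBox (d m : ℕ) : Finset (Fin d → ℤ) :=
  Fintype.piFinset fun _ => Finset.Ico (m : ℤ) (2 * m)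

lemma card_dyadicBox (d m : ℕ) : (dyadicBox d m).card = m ^ d := by
  simp only [dyadicBox, Fintype.card_piFinset, Int.card_Ico, Finset.prod_const, Finset.card_univ,
    Fintype.card_fin]
  congr
  omega

lemma znorm_mem_dyadicBox {d m : ℕ} (hd : 0 < d) {n : Fin d → ℤ} (hn : n ∈ dyadicBox d m) :
    m ≤ znorm n ∧ znorm n ≤ 2 * √d * m := by
  have hcoord i : (m : ℝ) ≤ n i ∧ (n i : ℝ) ≤ 2 * m := by
    have := Finset.mem_Ico.1 (Fintype.mem_piFinset.1 hn i)
    exact ⟨by exact_mod_cast this.1, by exact_mod_cast this.2.le⟩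
  refine ⟨(hcoord ⟨0, hd⟩).1.trans ((le_abs_self _).trans (abs_coord_le_znorm n _)), ?_⟩
  rw [mul_assoc, mul_left_comm]
  exact znorm_le_sqrt_mul (by positivity) fun i =>
    abs_le.2 ⟨by linarith [(hcoord i).1, m.cast_nonneg (α := ℝ)], (hcoord i).2⟩

noncomputable def heatSummand (d : ℕ) (t z : ℝ) : ℝ :=
  exp (-(z ^ 2) * t) * z ^ ((2 : ℝ) - d) * (log z)⁻¹ * (log (log z))⁻¹

lemma heatSummand_nonneg (d : ℕ) {t z : ℝ} (hz : 3 ≤ z) : 0 ≤ heatSummand d t z :=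
  mul_nonneg (mul_nonneg (mul_nonneg (exp_pos _).le (rpow_nonneg (by linarith) _))
    (inv_nonneg.2 (log_nonneg (by linarith)))) (inv_nonneg.2 (log_log_pos_of_three_le hz).le)

lemma heatSummand_ge (d : ℕ) {t a b z : ℝ} (ht : 0 < t) (ha : 3 ≤ a) (haz : a ≤ z)
    (hzb : z ≤ b) (hbt : b ^ 2 * t ≤ 1) :
    exp (-1) * (a ^ 2 / b ^ d) * ((log (1 / t))⁻¹ * (log (log (1 / t)))⁻¹) ≤
      heatSummand d t z := by
  have hz : 3 ≤ z := ha.trans haz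
  have hzt : z ^ 2 * t ≤ 1 := le_trans (by gcongr) hbt
  have hz_le : z ≤ 1 / t := by
    rw [le_div_iff₀ ht]; nlinarith
  have hlogs_nonneg : 0 ≤ (log (1 / t))⁻¹ * (log (log (1 / t)))⁻¹ :=
    mul_nonneg (inv_nonneg.2 (log_nonneg (by linarith)))
      (inv_nonneg.2 (log_log_pos_of_three_le (hz.trans hz_le)).le)
  rw [heatSummand, mul_assoc _ (log z)⁻¹]
  refine mul_le_mul (mul_le_mul (exp_le_exp.2 (by linarith))
    (sq_div_pow_le_rpow_two_sub d (by linarith) haz hzb)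
    (div_nonneg (sq_nonneg a) (pow_nonneg (by linarith) d)) (exp_pos _).le)
    (inv_log_mul_inv_log_log_le hz hz_le) hlogs_nonneg
    (mul_nonneg (exp_pos _).le (rpow_nonneg (by linarith) _))

lemma le_sum_dyadicBox_heatSummand {d m : ℕ} (hd : 0 < d) (hm : 3 ≤ m) {t : ℝ} (ht : 0 < t)
    (hmt : (2 * √d * m) ^ 2 * t ≤ 1) :
    exp (-1) * m ^ 2 / (2 * √d) ^ d * ((log (1 / t))⁻¹ * (log (log (1 / t)))⁻¹) ≤
      ∑ n ∈ dyadicBox d m, heatSummand d t (znorm n) := by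
  have hterm n (hn : n ∈ dyadicBox d m) := heatSummand_ge d ht (by exact_mod_cast hm)
    (znorm_mem_dyadicBox hd hn).1 (znorm_mem_dyadicBox hd hn).2 hmt
  have hsum := Finset.card_nsmul_le_sum _ _ _ hterm
  rw [card_dyadicBox, nsmul_eq_mul] at hsum
  refine le_of_eq_of_le ?_ hsum
  have hm0 : (m : ℝ) ≠ 0 := Nat.cast_ne_zero.2 (by omega)
  rw [Nat.cast_pow, mul_pow]
  field_simp
  ring

lemma le_tsum_heatSummand {d : ℕ} (hd : 0 < d) {t N : ℝ} (ht : 0 < t) (ht_inv : 36 * d ≤ t⁻¹)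
    (hN : t ^ (-(1 : ℝ) / 2) ≤ N) :
    exp (-1) / ((2 * √d) ^ d * (16 * d)) * t⁻¹ * (log (1 / t))⁻¹ * (log (log (1 / t)))⁻¹ ≤
      ∑' n : {n : Fin d → ℤ // 3 ≤ znorm n ∧ znorm n ≤ N}, heatSummand d t (znorm n.1) := by
  have hd1 : (1 : ℝ) ≤ d := by exact_mod_cast hd
  set R := t ^ (-(1 : ℝ) / 2)
  have hR2 : R ^ 2 = t⁻¹ := rpow_neg_one_div_two_sq ht
  have hR : 6 * √d ≤ R := by
    refine le_of_pow_le_pow_left₀ two_ne_zero (rpow_nonneg ht.le _) ?_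
    rw [hR2, mul_pow, sq_sqrt d.cast_nonneg]
    linarith
  obtain ⟨m, hm3, hmR, hRm⟩ := exists_nat_scale (by positivity) hR
  rw [sq_sqrt d.cast_nonneg] at hRm
  have hlogs : 0 ≤ (log (1 / t))⁻¹ * (log (log (1 / t)))⁻¹ :=
    mul_nonneg (inv_nonneg.2 (log_nonneg (by rw [one_div]; linarith)))
      (inv_nonneg.2 (log_log_pos_of_three_le (by rw [one_div]; linarith)).le)
  have : Finite {n : Fin d → ℤ // 3 ≤ znorm n ∧ znorm n ≤ N} :=
    ((finite_setOf_znorm_le N).subset fun _ hn => hn.2).to_subtype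
  calc exp (-1) / ((2 * √d) ^ d * (16 * d)) * t⁻¹ * (log (1 / t))⁻¹ * (log (log (1 / t)))⁻¹
      = exp (-1) / ((2 * √d) ^ d * (16 * d)) * R ^ 2 *
          ((log (1 / t))⁻¹ * (log (log (1 / t)))⁻¹) := by rw [hR2]; ring
    _ ≤ exp (-1) / ((2 * √d) ^ d * (16 * d)) * (16 * d * m ^ 2) *
          ((log (1 / t))⁻¹ * (log (log (1 / t)))⁻¹) := by gcongr
    _ = exp (-1) * m ^ 2 / (2 * √d) ^ d * ((log (1 / t))⁻¹ * (log (log (1 / t)))⁻¹) := by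
      field_simp
    _ ≤ ∑ n ∈ dyadicBox d m, heatSummand d t (znorm n) :=
      le_sum_dyadicBox_heatSummand hd hm3 ht (by
        calc (2 * √d * m) ^ 2 * t ≤ R ^ 2 * t := by gcongr
          _ = 1 := by rw [hR2, inv_mul_cancel₀ ht.ne'])
    _ ≤ _ := sum_le_tsum_subtype _
      (fun n hn => ⟨(Nat.ofNat_le_cast.2 hm3).trans (znorm_mem_dyadicBox hd hn).1,
        ((znorm_mem_dyadicBox hd hn).2.trans hmR).trans hN⟩)
      (fun n hn => heatSummand_nonneg d hn.1)

theorem stmt3 (d : ℕ) (hd : 0 < d) :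
    ∃ c : ℝ, 0 < c ∧ ∃ t₀ : ℝ, 0 < t₀ ∧ t₀ < 1 ∧
      ∀ t : ℝ, 0 < t → t < t₀ → ∀ N : ℝ, t ^ (-(1 : ℝ) / 2) ≤ N →
        c * t⁻¹ * (Real.log (1 / t))⁻¹ * (Real.log (Real.log (1 / t)))⁻¹
          ≤ ∑' n : {n : Fin d → ℤ // 3 ≤ znorm n ∧ znorm n ≤ N},
              Real.exp (-(znorm n.1 ^ 2) * t) * znorm n.1 ^ ((2 : ℝ) - d) *
                (Real.log (znorm n.1))⁻¹ * (Real.log (Real.log (znorm n.1)))⁻¹ := by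
  have hd1 : (1 : ℝ) ≤ d := by exact_mod_cast hd
  refine ⟨exp (-1) / ((2 * √d) ^ d * (16 * d)), by positivity, 1 / (36 * d), by positivity,
    by rw [div_lt_one (by positivity)]; linarith, fun t ht ht₀ N hN => ?_⟩
  have ht_inv : 36 * d ≤ t⁻¹ := by
    rw [lt_div_iff₀ (by positivity), ← lt_inv_mul_iff₀ ht, mul_one] at ht₀
    exact ht₀.le
  exact le_tsum_heatSummand hd ht ht_inv hN
end
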